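/- arXiv:2406.00462 — 2 statements merged into one kernel-verified Lean document; each statement's English description precedes it below -/
import Mathlib

section
/- Let α > 0 and let p satisfy −1 < p < 2α − 1. Set a = (p+1)/(2α) and b = (2α−1−p)/(2α), so a, b ∈ (0,1) and a + b = 1. Then for every ξ ∈ ℝ³ with ξ ≠ 0 and every t ≥ 0, ∫₀ᵗ |ξ|^{p+1} e^{−(t−τ)|ξ|^{2α}} (1+τ)^{−b} dτ ≤ (a/e)^a · ∫₀¹ (1−y)^{−a} y^{−b} dy. -/
/-!
The heat factor is bounded pointwise in the frequency: writing `x = |ξ|^{2α}` and `s = t - τ`,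
`|ξ|^{p+1} e^{-s x} = s^{-a} (s x)^a e^{-s x} ≤ (a/e)^a s^{-a}`, since `u ↦ u^a e^{-u}` peaks at
`u = a`. What remains is `∫₀ᵗ (t-τ)^{-a} (1+τ)^{-b} dτ`; the substitution `τ = t y` turns it into
`∫₀¹ (1-y)^{-a} t^b (1+ty)^{-b} dy`, and `t^b (1+ty)^{-b} ≤ y^{-b}` uniformly in `t`.
-/

open MeasureTheory Real Set

lemma intervalIntegral.integral_mono_of_nonneg_on_Ioo {f g : ℝ → ℝ} {a b : ℝ} (hab : a ≤ b)
    (hf : ∀ x ∈ Ioo a b, 0 ≤ f x) (hfg : ∀ x ∈ Ioo a b, f x ≤ g x)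
    (hg : IntervalIntegrable g volume a b) :
    ∫ x in a..b, f x ≤ ∫ x in a..b, g x := by
  simp only [intervalIntegral.integral_of_le hab, integral_Ioc_eq_integral_Ioo]
  exact setIntegral_mono_of_nonneg hf hfg (hg.1.mono_set Ioo_subset_Ioc_self)

namespace Real

lemma rpow_mul_exp_neg_le {a u : ℝ} (ha : 0 < a) (hu : 0 ≤ u) :
    u ^ a * exp (-u) ≤ (a / exp 1) ^ a := by
  have key : (u / a) ^ a ≤ exp (u - a) := by
    calc (u / a) ^ a ≤ exp (u / a - 1) ^ a := by
          gcongr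
          linarith [add_one_le_exp (u / a - 1)]
      _ = exp (u - a) := by rw [← exp_mul]; congr 1; field_simp
  rw [div_rpow hu ha.le, div_le_iff₀ (by positivity)] at key
  rw [div_rpow ha.le (exp_pos 1).le, exp_one_rpow, le_div_iff₀ (exp_pos a)]
  calc u ^ a * exp (-u) * exp a = u ^ a * exp (-(u - a)) := by
        rw [mul_assoc, ← exp_add]; ring_nf
    _ ≤ a ^ a := by
        rw [exp_neg, ← div_eq_mul_inv, div_le_iff₀ (exp_pos _)]; linarith

lemma rpow_mul_exp_neg_mul_le {a s x : ℝ} (ha : 0 < a) (hs : 0 < s) (hx : 0 ≤ x) :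
    x ^ a * exp (-(s * x)) ≤ (a / exp 1) ^ a * s ^ (-a) := by
  have hsplit : x ^ a = s ^ (-a) * (s * x) ^ a := by
    rw [mul_rpow hs.le hx, ← mul_assoc, ← rpow_add hs, neg_add_cancel, rpow_zero, one_mul]
  rw [hsplit, mul_assoc, mul_comm _ (s ^ (-a))]
  exact mul_le_mul_of_nonneg_left (rpow_mul_exp_neg_le ha (by positivity)) (by positivity)

end Real

lemma intervalIntegrable_one_sub_rpow_mul_rpow {a b : ℝ} (ha : a < 1) (hb : b < 1) :
    IntervalIntegrable (fun y : ℝ => (1 - y) ^ (-a) * y ^ (-b)) volume 0 1 := by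
  have hbeta := (Complex.betaIntegral_convergent (u := 1 - b) (v := 1 - a)
    (by simpa using hb) (by simpa using ha)).norm
  refine hbeta.congr_uIoo fun y hy => ?_
  rw [uIoo_of_le zero_le_one] at hy
  have h1y : (1 : ℂ) - y = ((1 - y : ℝ) : ℂ) := by push_cast; ring
  simp only [norm_mul, h1y, Complex.norm_cpow_eq_rpow_re_of_pos hy.1,
    Complex.norm_cpow_eq_rpow_re_of_pos (sub_pos.2 hy.2)]
  simp [mul_comm]

lemma intervalIntegrable_sub_rpow_mul_one_add_rpow {a b t : ℝ} (ha : a < 1) (hb : 0 ≤ b)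
    (ht : 0 ≤ t) :
    IntervalIntegrable (fun τ : ℝ => (t - τ) ^ (-a) * (1 + τ) ^ (-b)) volume 0 t := by
  have hdom : IntervalIntegrable (fun τ : ℝ => (t - τ) ^ (-a)) volume 0 t := by
    simpa using ((intervalIntegral.intervalIntegrable_rpow' (a := 0) (b := t)
      (r := -a) (by linarith)).comp_sub_left t).symm
  refine hdom.mono_fun' (by fun_prop) ?_
  rw [Filter.EventuallyLE, ae_restrict_iff' measurableSet_uIoc]
  refine Filter.Eventually.of_forall fun τ hτ => ?_
  rw [uIoc_of_le ht] at hτ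
  have hτt : 0 ≤ t - τ := sub_nonneg.2 hτ.2
  have hτ1 : 1 ≤ 1 + τ := by linarith [hτ.1]
  rw [norm_of_nonneg (by positivity)]
  exact mul_le_of_le_one_right (by positivity) (rpow_le_one_of_one_le_of_nonpos hτ1 (by linarith))

lemma integral_sub_rpow_mul_one_add_rpow_le_beta {a b t : ℝ} (ha0 : 0 < a) (ha1 : a < 1)
    (hab : a + b = 1) (ht : 0 ≤ t) :
    ∫ τ in (0:ℝ)..t, (t - τ) ^ (-a) * (1 + τ) ^ (-b) ≤
      ∫ y in (0:ℝ)..1, (1 - y) ^ (-a) * y ^ (-b) := by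
  have hbeta := intervalIntegrable_one_sub_rpow_mul_rpow ha1 (by linarith : b < 1)
  obtain rfl | ht0 := ht.eq_or_lt
  · rw [intervalIntegral.integral_same]
    refine intervalIntegral.integral_nonneg zero_le_one fun y hy => ?_
    have : 0 ≤ 1 - y := sub_nonneg.2 hy.2
    have : 0 ≤ y := hy.1
    positivity
  have hsub : ∫ τ in (0:ℝ)..t, (t - τ) ^ (-a) * (1 + τ) ^ (-b) =
      ∫ y in (0:ℝ)..1, t * ((t - t * y) ^ (-a) * (1 + t * y) ^ (-b)) := by
    simpa using (intervalIntegral.mul_integral_comp_mul_left (a := 0) (b := 1) (c := t)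
      (f := fun τ => (t - τ) ^ (-a) * (1 + τ) ^ (-b))).symm
  rw [hsub]
  refine intervalIntegral.integral_mono_of_nonneg_on_Ioo zero_le_one (fun y hy => ?_)
    (fun y hy => ?_) hbeta
  · have : 0 ≤ t - t * y := by nlinarith [hy.2]
    have : 0 ≤ 1 + t * y := by nlinarith [hy.1]
    positivity
  · have hty : 0 < t * y := mul_pos ht0 hy.1
    have h1y : 0 ≤ 1 - y := sub_nonneg.2 hy.2.le
    have ht_cancel : t * t ^ (-a) * t ^ (-b) = 1 := by
      rw [mul_assoc, ← rpow_add ht0, show -a + -b = -1 by linarith, rpow_neg_one,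
        mul_inv_cancel₀ ht0.ne']
    calc t * ((t - t * y) ^ (-a) * (1 + t * y) ^ (-b))
        ≤ t * ((t - t * y) ^ (-a) * (t * y) ^ (-b)) := by
          have : 0 ≤ t - t * y := by nlinarith [hy.2]
          gcongr t * (_ * ?_)
          exact rpow_le_rpow_of_nonpos hty (by linarith) (by linarith)
      _ = (t * t ^ (-a) * t ^ (-b)) * ((1 - y) ^ (-a) * y ^ (-b)) := by
          rw [show t - t * y = t * (1 - y) by ring, mul_rpow ht0.le h1y,
            mul_rpow ht0.le hy.1.le]
          ring
      _ = (1 - y) ^ (-a) * y ^ (-b) := by rw [ht_cancel, one_mul]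

theorem stmt_5 (α p a b : ℝ) (hα : 0 < α) (hp1 : -1 < p) (hp2 : p < 2 * α - 1)
    (ha : a = (p + 1) / (2 * α)) (hb : b = (2 * α - 1 - p) / (2 * α)) :
    ∀ ξ : EuclideanSpace ℝ (Fin 3), ξ ≠ 0 → ∀ t : ℝ, 0 ≤ t →
      ∫ τ in (0:ℝ)..t,
          ‖ξ‖ ^ (p + 1) * Real.exp (-(t - τ) * ‖ξ‖ ^ (2 * α)) * (1 + τ) ^ (-b) ≤
        (a / Real.exp 1) ^ a * ∫ y in (0:ℝ)..1, (1 - y) ^ (-a) * y ^ (-b) := by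
  intro ξ _ t ht
  have h2α : 0 < 2 * α := by linarith
  have ha0 : 0 < a := ha ▸ div_pos (by linarith) h2α
  have ha1 : a < 1 := by rw [ha, div_lt_one h2α]; linarith
  have hab : a + b = 1 := by rw [ha, hb]; field_simp; ring
  have hb0 : 0 ≤ b := by linarith
  set x := ‖ξ‖ ^ (2 * α) with hx
  have hx0 : 0 ≤ x := by positivity
  have hpow : ‖ξ‖ ^ (p + 1) = x ^ a := by
    rw [hx, ← rpow_mul (norm_nonneg ξ), ha, mul_div_cancel₀ _ h2α.ne']
  calc _ ≤ ∫ τ in (0:ℝ)..t, (a / exp 1) ^ a * ((t - τ) ^ (-a) * (1 + τ) ^ (-b)) := by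
        refine intervalIntegral.integral_mono_of_nonneg_on_Ioo ht (fun τ hτ => ?_)
          (fun τ hτ => ?_) ((intervalIntegrable_sub_rpow_mul_one_add_rpow ha1 hb0 ht).const_mul _)
        · have : 0 ≤ 1 + τ := by linarith [hτ.1]
          positivity
        · have : 0 ≤ 1 + τ := by linarith [hτ.1]
          rw [hpow, neg_mul, ← mul_assoc]
          gcongr ?_ * _
          exact rpow_mul_exp_neg_mul_le ha0 (sub_pos.2 hτ.2) hx0
    _ = (a / exp 1) ^ a * ∫ τ in (0:ℝ)..t, (t - τ) ^ (-a) * (1 + τ) ^ (-b) :=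
        intervalIntegral.integral_const_mul _ _
    _ ≤ _ := by
        gcongr
        exact integral_sub_rpow_mul_one_add_rpow_le_beta ha0 ha1 hab ht
end

section
/- Let α ∈ (0, 5/4) and let p satisfy 6α − 6 ≤ p < 2α − 1 and p > −1. Set a = (p+1)/(2α) and b = (2α−1−p)/(2α). Let M, K > 0, let U₀ : ℝ³ → ℂ be measurable with |U₀(ξ)| ≤ M |ξ|^{−p} for all ξ ≠ 0, let g : [0,∞) → [0,∞) satisfy g(τ) ≤ K (1+τ)^{−(5−4α)/(2α)} for all τ ≥ 0, and let U : ℝ³ × [0,∞) → ℂ satisfy |U(ξ,t)| ≤ |U₀(ξ)| + ∫₀ᵗ |ξ| e^{−(t−τ)|ξ|^{2α}} g(τ) dτ for all ξ ≠ 0 and t ≥ 0. Then sup_{t ≥ 0} sup_{ξ ≠ 0} |ξ|^p |U(ξ,t)| ≤ M + K (a/e)^a ∫₀¹ (1−y)^{−a} y^{−b} dy. -/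
/-!
Multiply the Duhamel bound by `|ξ|^p`. The initial datum contributes at most `M`. In the forcing
term put `s = |ξ|^{2α}`, so that `|ξ|^{p+1} = s^a`; the elementary bound `r^a e^{-r} ≤ (a/e)^a`
with `r = (t-τ)s` gives `s^a e^{-(t-τ)s} ≤ (a/e)^a (t-τ)^{-a}`, while `p ≥ 6α - 6` means
`(5-4α)/(2α) ≥ b`, so `g τ ≤ K τ^{-b}`. What is left is `∫₀ᵗ (t-τ)^{-a} τ^{-b} dτ`, which is the
beta integral `B(1-a, 1-b)` for every `t > 0` because `a + b = 1`.
-/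

open MeasureTheory Real Set

lemma rpow_mul_exp_neg_le {a r : ℝ} (ha : 0 < a) (hr : 0 < r) :
    r ^ a * exp (-r) ≤ (a / exp 1) ^ a := by
  rw [rpow_def_of_pos hr, rpow_def_of_pos (by positivity), ← exp_add, exp_le_exp,
    log_div ha.ne' (exp_ne_zero 1), log_exp]
  have hlog : log (r / a) ≤ r / a - 1 := log_le_sub_one_of_pos (by positivity)
  rw [log_div hr.ne' ha.ne'] at hlog
  have hscaled := mul_le_mul_of_nonneg_left hlog ha.le
  rw [mul_sub, mul_sub, mul_one, mul_div_cancel₀ r ha.ne'] at hscaled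
  linarith

lemma rpow_mul_exp_neg_mul_le {a s u : ℝ} (ha : 0 < a) (hs : 0 < s) (hu : 0 < u) :
    s ^ a * exp (-u * s) ≤ (a / exp 1) ^ a * u ^ (-a) := by
  have h := mul_le_mul_of_nonneg_left (rpow_mul_exp_neg_le ha (mul_pos hu hs))
    (rpow_nonneg hu.le (-a))
  calc s ^ a * exp (-u * s)
      = u ^ (-a) * ((u * s) ^ a * exp (-(u * s))) := by
        rw [mul_rpow hu.le hs.le, ← mul_assoc, ← mul_assoc, ← rpow_add hu, neg_add_cancel,
          rpow_zero, one_mul, neg_mul]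
    _ ≤ u ^ (-a) * (a / exp 1) ^ a := h
    _ = (a / exp 1) ^ a * u ^ (-a) := mul_comm _ _

lemma one_add_rpow_neg_le_rpow_neg {τ b c : ℝ} (hτ : 0 < τ) (hb : 0 ≤ b) (hbc : b ≤ c) :
    (1 + τ) ^ (-c) ≤ τ ^ (-b) :=
  calc (1 + τ) ^ (-c) ≤ (1 + τ) ^ (-b) := rpow_le_rpow_of_exponent_le (by linarith) (by linarith)
    _ ≤ τ ^ (-b) := rpow_le_rpow_of_nonpos hτ (by linarith) (by linarith)

lemma intervalIntegrable_sub_rpow_mul_rpow {a b t : ℝ} (ha : a < 1) (hb : b < 1) (ht : 0 < t) :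
    IntervalIntegrable (fun τ : ℝ => (t - τ) ^ (-a) * τ ^ (-b)) volume 0 t := by
  have hleft : IntervalIntegrable (fun τ : ℝ => (t - τ) ^ (-a) * τ ^ (-b)) volume 0 (t / 2) := by
    refine IntervalIntegrable.continuousOn_mul (intervalIntegral.intervalIntegrable_rpow'
      (by linarith)) ((continuousOn_const.sub continuousOn_id).rpow_const fun τ hτ => ?_)
    rw [uIcc_of_le (by linarith)] at hτ
    exact Or.inl (sub_pos.2 (show τ < t by linarith [hτ.2])).ne'
  have hright : IntervalIntegrable (fun τ : ℝ => (t - τ) ^ (-a) * τ ^ (-b)) volume (t / 2) t := by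
    have h := ((intervalIntegral.intervalIntegrable_rpow' (r := -a) (a := 0) (b := t / 2)
      (by linarith)).comp_sub_left t).symm
    rw [sub_zero, show t - t / 2 = t / 2 by ring] at h
    refine h.mul_continuousOn (continuousOn_id.rpow_const fun τ hτ => ?_)
    rw [uIcc_of_le (by linarith)] at hτ
    exact Or.inl (by linarith [hτ.1] : (0:ℝ) < τ).ne'
  exact hleft.trans hright

lemma integral_sub_rpow_mul_rpow {a b t : ℝ} (ht : 0 < t) :
    ∫ τ in (0:ℝ)..t, (t - τ) ^ (-a) * τ ^ (-b)
      = t ^ (1 - a - b) * ∫ y in (0:ℝ)..1, (1 - y) ^ (-a) * y ^ (-b) := by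
  have hsubst := intervalIntegral.integral_comp_mul_left (a := 0) (b := 1)
    (fun τ : ℝ => (t - τ) ^ (-a) * τ ^ (-b)) ht.ne'
  rw [mul_zero, mul_one, smul_eq_mul] at hsubst
  have hscale : ∀ y ∈ uIcc (0:ℝ) 1, (t - t * y) ^ (-a) * (t * y) ^ (-b)
      = t ^ (-a - b) * ((1 - y) ^ (-a) * y ^ (-b)) := by
    intro y hy
    rw [uIcc_of_le zero_le_one] at hy
    rw [show t - t * y = t * (1 - y) by ring, mul_rpow ht.le (by linarith [hy.2]),
      mul_rpow ht.le hy.1, show -a - b = -a + -b by ring, rpow_add ht]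
    ring
  rw [intervalIntegral.integral_congr hscale, intervalIntegral.integral_const_mul] at hsubst
  rw [eq_inv_mul_iff_mul_eq₀ ht.ne'] at hsubst
  rw [← hsubst, ← mul_assoc, show 1 - a - b = 1 + (-a - b) by ring, rpow_add ht, rpow_one]

lemma integral_beta_nonneg (a b : ℝ) : 0 ≤ ∫ y in (0:ℝ)..1, (1 - y) ^ (-a) * y ^ (-b) :=
  intervalIntegral.integral_nonneg zero_le_one fun _ hy =>
    mul_nonneg (rpow_nonneg (by linarith [hy.2]) _) (rpow_nonneg hy.1 _)

lemma integral_mono_of_nonneg_of_le_Ioo {f g : ℝ → ℝ} {a b : ℝ} (hab : a ≤ b)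
    (hf : ∀ x ∈ Ioo a b, 0 ≤ f x) (hg : IntervalIntegrable g volume a b)
    (h : ∀ x ∈ Ioo a b, f x ≤ g x) :
    ∫ x in a..b, f x ≤ ∫ x in a..b, g x := by
  simp only [intervalIntegral.integral_of_le hab, integral_Ioc_eq_integral_Ioo]
  exact integral_mono_of_nonneg ((ae_restrict_iff' measurableSet_Ioo).2 (ae_of_all _ hf))
    (hg.1.mono_set Ioo_subset_Ioc_self) ((ae_restrict_iff' measurableSet_Ioo).2 (ae_of_all _ h))

lemma rpow_mul_integral_exp_mul_le {a b s t K : ℝ} {g : ℝ → ℝ} (ha : 0 < a) (ha1 : a < 1)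
    (hb1 : b < 1) (hab : a + b = 1) (hs : 0 < s) (ht : 0 ≤ t) (hK : 0 ≤ K)
    (hg0 : ∀ τ ∈ Ioo 0 t, 0 ≤ g τ) (hg : ∀ τ ∈ Ioo 0 t, g τ ≤ K * τ ^ (-b)) :
    s ^ a * ∫ τ in (0:ℝ)..t, exp (-(t - τ) * s) * g τ
      ≤ K * (a / exp 1) ^ a * ∫ y in (0:ℝ)..1, (1 - y) ^ (-a) * y ^ (-b) := by
  rcases ht.eq_or_lt with rfl | ht
  · rw [intervalIntegral.integral_same, mul_zero]
    exact mul_nonneg (by positivity) (integral_beta_nonneg a b)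
  have hpointwise : ∀ τ ∈ Ioo 0 t, s ^ a * (exp (-(t - τ) * s) * g τ)
      ≤ K * (a / exp 1) ^ a * ((t - τ) ^ (-a) * τ ^ (-b)) := fun τ hτ =>
    calc s ^ a * (exp (-(t - τ) * s) * g τ) = (s ^ a * exp (-(t - τ) * s)) * g τ := by ring
      _ ≤ ((a / exp 1) ^ a * (t - τ) ^ (-a)) * (K * τ ^ (-b)) :=
        mul_le_mul (rpow_mul_exp_neg_mul_le ha hs (by linarith [hτ.2])) (hg τ hτ) (hg0 τ hτ)
          (by have := hτ.2; positivity)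
      _ = K * (a / exp 1) ^ a * ((t - τ) ^ (-a) * τ ^ (-b)) := by ring
  calc s ^ a * ∫ τ in (0:ℝ)..t, exp (-(t - τ) * s) * g τ
      = ∫ τ in (0:ℝ)..t, s ^ a * (exp (-(t - τ) * s) * g τ) :=
        (intervalIntegral.integral_const_mul _ _).symm
    _ ≤ ∫ τ in (0:ℝ)..t, K * (a / exp 1) ^ a * ((t - τ) ^ (-a) * τ ^ (-b)) :=
        integral_mono_of_nonneg_of_le_Ioo ht.le
          (fun τ hτ => mul_nonneg (by positivity) (mul_nonneg (exp_nonneg _) (hg0 τ hτ)))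
          ((intervalIntegrable_sub_rpow_mul_rpow ha1 hb1 ht).const_mul _) hpointwise
    _ = K * (a / exp 1) ^ a * ∫ y in (0:ℝ)..1, (1 - y) ^ (-a) * y ^ (-b) := by
        rw [intervalIntegral.integral_const_mul, integral_sub_rpow_mul_rpow ht,
          show 1 - a - b = 0 by linarith, rpow_zero, one_mul]

theorem stmt_19_general
    (α p a b M K : ℝ) (hα : α ∈ Set.Ioo (0:ℝ) (5/4))
    (hp1 : 6 * α - 6 ≤ p) (hp2 : p < 2 * α - 1) (hp3 : -1 < p)
    (ha : a = (p + 1) / (2 * α)) (hb : b = (2 * α - 1 - p) / (2 * α))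
    (hK : 0 < K)
    (U₀ : EuclideanSpace ℝ (Fin 3) → ℂ)
    (hU₀ : ∀ ξ : EuclideanSpace ℝ (Fin 3), ξ ≠ 0 → ‖U₀ ξ‖ ≤ M * ‖ξ‖ ^ (-p))
    (g : ℝ → ℝ)
    (hg_nonneg : ∀ τ : ℝ, 0 ≤ τ → 0 ≤ g τ)
    (hg : ∀ τ : ℝ, 0 ≤ τ → g τ ≤ K * (1 + τ) ^ (-(5 - 4 * α) / (2 * α)))
    (U : EuclideanSpace ℝ (Fin 3) → ℝ → ℂ)
    (hU : ∀ ξ : EuclideanSpace ℝ (Fin 3), ξ ≠ 0 → ∀ t : ℝ, 0 ≤ t →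
      ‖U ξ t‖ ≤ ‖U₀ ξ‖ +
        ∫ τ in (0:ℝ)..t, ‖ξ‖ * Real.exp (-(t - τ) * ‖ξ‖ ^ (2 * α)) * g τ) :
    ∀ t : ℝ, 0 ≤ t → ∀ ξ : EuclideanSpace ℝ (Fin 3), ξ ≠ 0 →
      ‖ξ‖ ^ p * ‖U ξ t‖ ≤
        M + K * (a / Real.exp 1) ^ a * ∫ y in (0:ℝ)..1, (1 - y) ^ (-a) * y ^ (-b) := by
  obtain ⟨hα0, -⟩ := hα
  have h2α : 0 < 2 * α := by linarith
  have ha0 : 0 < a := ha ▸ div_pos (by linarith) h2α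
  have ha1 : a < 1 := by rw [ha, div_lt_one h2α]; linarith
  have hb0 : 0 < b := hb ▸ div_pos (by linarith) h2α
  have hb1 : b < 1 := by rw [hb, div_lt_one h2α]; linarith
  have hab : a + b = 1 := by rw [ha, hb]; field_simp; ring
  have hb_le : b ≤ (5 - 4 * α) / (2 * α) := by
    rw [hb]; exact div_le_div_of_nonneg_right (by linarith) h2α.le
  intro t ht ξ hξ
  have hξ0 : 0 < ‖ξ‖ := norm_pos_iff.mpr hξ
  have hξp : 0 ≤ ‖ξ‖ ^ p := rpow_nonneg hξ0.le p
  have hinitial : ‖ξ‖ ^ p * ‖U₀ ξ‖ ≤ M :=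
    calc ‖ξ‖ ^ p * ‖U₀ ξ‖ ≤ ‖ξ‖ ^ p * (M * ‖ξ‖ ^ (-p)) := mul_le_mul_of_nonneg_left (hU₀ ξ hξ) hξp
      _ = M := by rw [mul_left_comm, ← rpow_add hξ0, add_neg_cancel, rpow_zero, mul_one]
  have hscale : ‖ξ‖ ^ p * ‖ξ‖ = (‖ξ‖ ^ (2 * α)) ^ a := by
    rw [← rpow_mul hξ0.le, show 2 * α * a = p + 1 by rw [ha]; field_simp, rpow_add_one hξ0.ne']
  have hg_decay : ∀ τ ∈ Ioo 0 t, g τ ≤ K * τ ^ (-b) := fun τ hτ =>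
    (hg τ hτ.1.le).trans <| mul_le_mul_of_nonneg_left
      (neg_div (2 * α) (5 - 4 * α) ▸ one_add_rpow_neg_le_rpow_neg hτ.1 hb0.le hb_le) hK.le
  have hforcing := rpow_mul_integral_exp_mul_le ha0 ha1 hb1 hab (rpow_pos_of_pos hξ0 (2 * α)) ht
    hK.le (fun τ hτ => hg_nonneg τ hτ.1.le) hg_decay
  calc ‖ξ‖ ^ p * ‖U ξ t‖
      ≤ ‖ξ‖ ^ p * ‖U₀ ξ‖ + ‖ξ‖ ^ p * ‖ξ‖ *
          ∫ τ in (0:ℝ)..t, exp (-(t - τ) * ‖ξ‖ ^ (2 * α)) * g τ := by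
        rw [mul_assoc, ← intervalIntegral.integral_const_mul, ← mul_add]
        simpa only [mul_assoc] using mul_le_mul_of_nonneg_left (hU ξ hξ t ht) hξp
    _ ≤ M + K * (a / exp 1) ^ a * ∫ y in (0:ℝ)..1, (1 - y) ^ (-a) * y ^ (-b) := by
        rw [hscale]; exact add_le_add hinitial hforcing

theorem stmt_19
    (α p a b M K : ℝ) (hα : α ∈ Set.Ioo (0:ℝ) (5/4))
    (hp1 : 6 * α - 6 ≤ p) (hp2 : p < 2 * α - 1) (hp3 : -1 < p)
    (ha : a = (p + 1) / (2 * α)) (hb : b = (2 * α - 1 - p) / (2 * α))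
    (hM : 0 < M) (hK : 0 < K)
    (U₀ : EuclideanSpace ℝ (Fin 3) → ℂ)
    (hU₀ : ∀ ξ : EuclideanSpace ℝ (Fin 3), ξ ≠ 0 → ‖U₀ ξ‖ ≤ M * ‖ξ‖ ^ (-p))
    (g : ℝ → ℝ)
    (hg_nonneg : ∀ τ : ℝ, 0 ≤ τ → 0 ≤ g τ)
    (hg : ∀ τ : ℝ, 0 ≤ τ → g τ ≤ K * (1 + τ) ^ (-(5 - 4 * α) / (2 * α)))
    (U : EuclideanSpace ℝ (Fin 3) → ℝ → ℂ)
    (hU : ∀ ξ : EuclideanSpace ℝ (Fin 3), ξ ≠ 0 → ∀ t : ℝ, 0 ≤ t →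
      ‖U ξ t‖ ≤ ‖U₀ ξ‖ +
        ∫ τ in (0:ℝ)..t, ‖ξ‖ * Real.exp (-(t - τ) * ‖ξ‖ ^ (2 * α)) * g τ) :
    ∀ t : ℝ, 0 ≤ t → ∀ ξ : EuclideanSpace ℝ (Fin 3), ξ ≠ 0 →
      ‖ξ‖ ^ p * ‖U ξ t‖ ≤
        M + K * (a / Real.exp 1) ^ a * ∫ y in (0:ℝ)..1, (1 - y) ^ (-a) * y ^ (-b) :=
  stmt_19_general α p a b M K hα hp1 hp2 hp3 ha hb hK U₀ hU₀ g hg_nonneg hg U hU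
end
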